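/- arXiv:1909.11593 — 5 statements merged into one kernel-verified Lean document; each statement's English description precedes it below -/
import Mathlib

section
/- If a timed word v with letters (τ_j,(σ'_j,ρ'_j)) refines an observation u with letters (Iᵢ,(σᵢ,ρᵢ)) (i.e., u ⊑ v), then there exists a monotone function π : ℕ → pos(u) such that for every j ∈ ℕ: τ_j ∈ I_{π(j)}, σ_{π(j)} ⊑ σ'_j, and ρ_{π(j)} ⊑ ρ'_j. -/
open scoped Classical

namespace RV

/-- The time domain: nonnegative rationals. -/
abbrev Q := NNRat

/-- An interval: a nonempty, order-convex subset of `ℚ≥0`. -/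
def IsInterval (I : Set Q) : Prop :=
  I.Nonempty ∧ ∀ a ∈ I, ∀ b ∈ I, ∀ c : Q, a ≤ c → c ≤ b → c ∈ I

abbrev Iv : Type := {I : Set Q // IsInterval I}

/-- `I − J := {τ − τ' | τ ∈ I, τ' ∈ J} ∩ ℚ≥0` (the set of nonnegative differences). -/
def ivSub (I J : Set Q) : Set Q := {d | ∃ τ ∈ I, ∃ τ' ∈ J, τ' + d = τ}

/-- The three truth values. -/
inductive Tri : Type
  | tt | ff | unk
  deriving DecidableEq

namespace Tri

/-- strong Kleene negation -/
def neg : Tri → Tri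
  | tt => ff
  | ff => tt
  | unk => unk

/-- strong Kleene disjunction -/
def kor : Tri → Tri → Tri
  | tt, _ => tt
  | ff, y => y
  | unk, tt => tt
  | unk, _ => unk

/-- strong Kleene conjunction -/
def kand : Tri → Tri → Tri
  | ff, _ => ff
  | tt, y => y
  | unk, ff => ff
  | unk, _ => unk

/-- strong Kleene implication -/
def kimp (x y : Tri) : Tri := kor (neg x) y

/-- The knowledge order `≼` on truth values (reflexive closure of `⊥ ≺ t`, `⊥ ≺ f`). -/
def le : Tri → Tri → Prop
  | unk, _ => True
  | x, y => x = y

def ofBool : Bool → Tri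
  | true => tt
  | false => ff

/-- `x ∈ 𝟚` -/
def IsBool (x : Tri) : Prop := x ≠ unk

/-- binary meet with respect to the knowledge order -/
def meet : Tri → Tri → Tri
  | tt, tt => tt
  | ff, ff => ff
  | _, _ => unk

end Tri

/-- Kleene disjunction of a finite family. -/
def kOrList (l : List Tri) : Tri := l.foldr Tri.kor Tri.ff

/-- Kleene conjunction of a finite family. -/
def kAndList (l : List Tri) : Tri := l.foldr Tri.kand Tri.tt

/-- A letter of an observation: an interval together with an alphabet element. -/
abbrev Letter (A : Type*) : Type _ := Set Q × A

/-- The interval of the letter at position `i` (`∅` out of range). -/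
def ivAt {A : Type*} (w : List (Letter A)) (i : ℕ) : Set Q :=
  (w[i]?.map Prod.fst).getD ∅

/-- The alphabet component of the letter at position `i` (default out of range). -/
def letAt {A : Type*} (a0 : A) (w : List (Letter A)) (i : ℕ) : A :=
  (w[i]?.map Prod.snd).getD a0

/-- `tp_w(i)`: `t` if position `i` is a time point, `⊥` otherwise. -/
noncomputable def tp {A : Type*} (w : List (Letter A)) (i : ℕ) : Tri :=
  if ∃ τ : Q, ivAt w i = {τ} then Tri.tt else Tri.unk

/-- `mc_{w,I}(i,j)`: validity of the metric constraint `I` between positions `i` and `j`. -/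
noncomputable def mc {A : Type*} (w : List (Letter A)) (I : Set Q) (i j : ℕ) : Tri :=
  if (ivSub (ivAt w i) (ivAt w j)).Nonempty ∧ ivSub (ivAt w i) (ivAt w j) ⊆ I then Tri.tt
  else if ivSub (ivAt w i) (ivAt w j) ∩ I = ∅ then Tri.ff
  else Tri.unk

/-- The one-step transformations (T1), (T2), (T3) on observations, over an alphabet
with strict order `lt`. -/
inductive Step {A : Type*} (lt : A → A → Prop) : List (Letter A) → List (Letter A) → Prop
  | split (u v : List (Letter A)) (I : Set Q) (a : A) (τ : Q)
      (hI : ¬ I.Subsingleton) (hτ : τ ∈ I) (hpos : 0 < τ) :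
      Step lt (u ++ (I, a) :: v)
        (u ++ (I ∩ Set.Iio τ, a) :: (({τ} : Set Q), a) :: (I ∩ Set.Ioi τ, a) :: v)
  | split0 (u v : List (Letter A)) (I : Set Q) (a : A)
      (hI : ¬ I.Subsingleton) (hτ : (0 : Q) ∈ I) :
      Step lt (u ++ (I, a) :: v)
        (u ++ (({0} : Set Q), a) :: (I ∩ Set.Ioi 0, a) :: v)
  | remove (u v : List (Letter A)) (I : Set Q) (a : A)
      (hI : ¬ I.Subsingleton) (hbd : BddAbove I) :
      Step lt (u ++ (I, a) :: v) (u ++ v)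
  | data (u v : List (Letter A)) (τ : Q) (a a' : A) (h : lt a a') :
      Step lt (u ++ (({τ} : Set Q), a) :: v) (u ++ (({τ} : Set Q), a') :: v)

/-- The set `Obs(Σ)` of observations, defined inductively from the initial
observation `([0,∞), a₀)` by the transformations (T1)–(T3). -/
inductive Obs {A : Type*} (lt : A → A → Prop) (a0 : A) : List (Letter A) → Prop
  | base : Obs lt a0 [(Set.univ, a0)]
  | step {w w' : List (Letter A)} : Obs lt a0 w → Step lt w w' → Obs lt a0 w'

/-- The refinement relation `⊑` on observations: reflexive-transitive closure of the
one-step transformation relation. -/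
def Refines {A : Type*} (lt : A → A → Prop) : List (Letter A) → List (Letter A) → Prop :=
  Relation.ReflTransGen (Step lt)

/-- Extension order on partial functions. -/
def pext {α : Type*} {β : α → Type*} (f g : (a : α) → Option (β a)) : Prop :=
  ∀ a b, f a = some b → g a = some b

/-- The alphabet `Σ`: pairs of partial interpretations of predicate symbols and registers. -/
abbrev Sig (P : Type) (ι : P → ℕ) (R D : Type) : Type :=
  ((p : P) → Option (Set (Fin (ι p) → D))) × (R → Option D)

def sigLe {P : Type} {ι : P → ℕ} {R D : Type} (s s' : Sig P ι R D) : Prop :=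
  pext s.1 s'.1 ∧ pext s.2 s'.2

def sigLt {P : Type} {ι : P → ℕ} {R D : Type} (s s' : Sig P ι R D) : Prop :=
  sigLe s s' ∧ s ≠ s'

/-- The least element `(∅, ∅)` of `Σ`. -/
def botSig {P : Type} {ι : P → ℕ} {R D : Type} : Sig P ι R D :=
  (fun _ => none, fun _ => none)

/-- MTL↓ formulas. -/
inductive Formula (P : Type) (ι : P → ℕ) (V R : Type) : Type
  | tt : Formula P ι V R
  | pred (p : P) (args : Fin (ι p) → V) : Formula P ι V R
  | freeze (r : R) (x : V) (φ : Formula P ι V R) : Formula P ι V R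
  | neg (φ : Formula P ι V R) : Formula P ι V R
  | or (φ ψ : Formula P ι V R) : Formula P ι V R
  | prev (I : Iv) (φ : Formula P ι V R) : Formula P ι V R
  | next (I : Iv) (φ : Formula P ι V R) : Formula P ι V R
  | since (I : Iv) (φ ψ : Formula P ι V R) : Formula P ι V R
  | until (I : Iv) (φ ψ : Formula P ι V R) : Formula P ι V R

section Disjuncts
variable {A : Type*}

/-- The disjunct `c₀` in the semantics of `•_I` and `○_I`. -/
noncomputable def cZero (w : List (Letter A)) (I : Set Q) (g : ℕ → Tri) (i : ℕ) : Tri :=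
  if I ≠ ({0} : Set Q) then (mc w I i i).kand ((g i).kand (tp w i).neg) else Tri.ff

/-- The disjunct `c₁` in the semantics of `○_I`. -/
noncomputable def cNext1 (w : List (Letter A)) (I : Set Q) (g : ℕ → Tri) (i : ℕ) : Tri :=
  if i + 1 < w.length then
    (mc w I (i + 1) i).kand ((g (i + 1)).kand ((tp w (i + 1)).kand (tp w i)))
  else Tri.ff

/-- The disjunct `c₂` in the semantics of `○_I`. -/
noncomputable def cNext2 (w : List (Letter A)) (I : Set Q) (g : ℕ → Tri) (i : ℕ) : Tri :=
  if i + 2 < w.length then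
    (mc w I (i + 2) i).kand ((g (i + 2)).kand (tp w (i + 1)).neg)
  else Tri.ff

/-- The disjunct `c₋₁` in the semantics of `•_I`. -/
noncomputable def cPrev1 (w : List (Letter A)) (I : Set Q) (g : ℕ → Tri) (i : ℕ) : Tri :=
  if 1 ≤ i then
    (mc w I i (i - 1)).kand ((g (i - 1)).kand ((tp w (i - 1)).kand (tp w i)))
  else Tri.ff

/-- The disjunct `c₋₂` in the semantics of `•_I`. -/
noncomputable def cPrev2 (w : List (Letter A)) (I : Set Q) (g : ℕ → Tri) (i : ℕ) : Tri :=
  if 2 ≤ i then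
    (mc w I i (i - 2)).kand ((g (i - 2)).kand (tp w (i - 1)).neg)
  else Tri.ff

end Disjuncts

variable {P : Type} {ι : P → ℕ} {V R D : Type}

/-- The three-valued semantics `⟦w,i,ν⟧(φ) ∈ 𝟛` of MTL↓ on observations. -/
noncomputable def osem [DecidableEq V] (w : List (Letter (Sig P ι R D))) :
    Formula P ι V R → ℕ → (V → Option D) → Tri
  | .tt, _, _ => Tri.tt
  | .pred p args, i, ν =>
      if ∃ (S : Set (Fin (ι p) → D)) (f : Fin (ι p) → D),
          (letAt botSig w i).1 p = some S ∧ (∀ k, ν (args k) = some (f k)) ∧ f ∈ S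
      then Tri.tt
      else if ∃ (S : Set (Fin (ι p) → D)) (f : Fin (ι p) → D),
          (letAt botSig w i).1 p = some S ∧ (∀ k, ν (args k) = some (f k)) ∧ f ∉ S
      then Tri.ff
      else Tri.unk
  | .freeze r x φ, i, ν => osem w φ i (Function.update ν x ((letAt botSig w i).2 r))
  | .neg φ, i, ν => (osem w φ i ν).neg
  | .or φ ψ, i, ν => (osem w φ i ν).kor (osem w ψ i ν)
  | .since I φ ψ, i, ν =>
      kOrList ((List.range (i + 1)).map fun j =>
        (tp w j).kand ((mc w I.1 i j).kand ((osem w ψ j ν).kand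
          (kAndList ((List.range' (j + 1) (i - j)).map fun k =>
            (tp w k).kimp (osem w φ k ν))))))
  | .until I φ ψ, i, ν =>
      kOrList ((List.range' i (w.length - i)).map fun j =>
        (tp w j).kand ((mc w I.1 j i).kand ((osem w ψ j ν).kand
          (kAndList ((List.range' i (j - i)).map fun k =>
            (tp w k).kimp (osem w φ k ν))))))
  | .prev I φ, i, ν =>
      (cZero w I.1 (fun k => osem w φ k ν) i).kor
        ((cPrev1 w I.1 (fun k => osem w φ k ν) i).kor
          (cPrev2 w I.1 (fun k => osem w φ k ν) i))
  | .next I φ, i, ν =>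
      (cZero w I.1 (fun k => osem w φ k ν) i).kor
        ((cNext1 w I.1 (fun k => osem w φ k ν) i).kor
          (cNext2 w I.1 (fun k => osem w φ k ν) i))

/-- The position of the time point of `w` with timestamp `τ`, if any. -/
noncomputable def tpPos {A : Type*} (w : List (Letter A)) (τ : Q) : Option ℕ :=
  (List.range w.length).find? fun i => decide (ivAt w i = ({τ} : Set Q))

/-- `⟦w,τ,ν⟧ᵉ(φ)`: the three-valued semantics at timestamp `τ`. -/
noncomputable def osemE [DecidableEq V] (w : List (Letter (Sig P ι R D)))
    (φ : Formula P ι V R) (τ : Q) (ν : V → Option D) : Tri :=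
  match tpPos w τ with
  | some i => osem w φ i ν
  | none => Tri.unk

/-- A timed word over `A`: strictly increasing, nonzeno timestamps. -/
structure TimedWord (A : Type*) where
  seq : ℕ → Q × A
  strictMono : StrictMono fun j => (seq j).1
  nonzeno : ∀ t : Q, ∃ j, t < (seq j).1

/-- The Boolean semantics of MTL↓ on timed words. -/
def bsem (v : ℕ → Q × Sig P ι R D) : Formula P ι V R → ℕ → (V → Option D) → Prop
  | .tt, _, _ => True
  | .pred p args, j, ν =>
      ∃ (S : Set (Fin (ι p) → D)) (f : Fin (ι p) → D),
        ((v j).2).1 p = some S ∧ (∀ k, ν (args k) = some (f k)) ∧ f ∈ S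
  | .freeze r x φ, j, ν => bsem v φ j (Function.update ν x (((v j).2).2 r))
  | .neg φ, j, ν => ¬ bsem v φ j ν
  | .or φ ψ, j, ν => bsem v φ j ν ∨ bsem v ψ j ν
  | .prev I φ, j, ν =>
      0 < j ∧ (∃ d ∈ I.1, (v (j - 1)).1 + d = (v j).1) ∧ bsem v φ (j - 1) ν
  | .next I φ, j, ν =>
      (∃ d ∈ I.1, (v j).1 + d = (v (j + 1)).1) ∧ bsem v φ (j + 1) ν
  | .since I φ ψ, j, ν =>
      ∃ j' ≤ j, (∃ d ∈ I.1, (v j').1 + d = (v j).1) ∧ bsem v ψ j' ν ∧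
        ∀ k, j' < k → k ≤ j → bsem v φ k ν
  | .until I φ ψ, j, ν =>
      ∃ j', j ≤ j' ∧ (∃ d ∈ I.1, (v j).1 + d = (v j').1) ∧ bsem v ψ j' ν ∧
        ∀ k, j ≤ k → k < j' → bsem v φ k ν

/-- `⟦v,τ,ν⟧ᵉ(φ)` on timed words: the Boolean value at timestamp `τ`, `⊥` if `τ` is
not a timestamp of `v`. -/
noncomputable def bsemE (v : ℕ → Q × Sig P ι R D) (φ : Formula P ι V R)
    (τ : Q) (ν : V → Option D) : Tri :=
  if ∃ j, (v j).1 = τ ∧ bsem v φ j ν then Tri.tt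
  else if ∃ j, (v j).1 = τ then Tri.ff
  else Tri.unk

/-- A timed word `v` refines an observation `u`. -/
def RefinesTW (u : List (Letter (Sig P ι R D))) (v : ℕ → Q × Sig P ι R D) : Prop :=
  ∀ j : ℕ, ∃ i, i < u.length ∧ (v j).1 ∈ ivAt u i ∧ sigLe (letAt botSig u i) ((v j).2)

/-- Free variables of a formula. -/
def freeVars : Formula P ι V R → Set V
  | .tt => ∅
  | .pred _ args => Set.range args
  | .freeze _ x φ => freeVars φ \ {x}
  | .neg φ => freeVars φ
  | .or φ ψ => freeVars φ ∪ freeVars ψ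
  | .prev _ φ => freeVars φ
  | .next _ φ => freeVars φ
  | .since _ φ ψ => freeVars φ ∪ freeVars ψ
  | .until _ φ ψ => freeVars φ ∪ freeVars ψ

/-- A closed formula. -/
def Closed (φ : Formula P ι V R) : Prop := freeVars φ = ∅

/-- A valid observation sequence. -/
def ValidObsSeq (ws : ℕ → List (Letter (Sig P ι R D))) : Prop :=
  ws 0 = [(Set.univ, botSig)] ∧
    ∀ i, Refines sigLt (ws i) (ws (i + 1)) ∧ ws i ≠ ws (i + 1)

/-- The meet (in the lower semilattice `(𝟛,≺)`) of the values of `f` over `U`: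
a Boolean value `b` if the family is nonempty and constantly `b`, else `⊥`. -/
noncomputable def meetOver {α : Type*} (U : Set α) (f : α → Tri) : Tri :=
  if U.Nonempty ∧ ∀ a ∈ U, f a = Tri.tt then Tri.tt
  else if U.Nonempty ∧ ∀ a ∈ U, f a = Tri.ff then Tri.ff
  else Tri.unk

/-- `U_w`: the set of timed words refining the observation `w`. -/
def UW (w : List (Letter (Sig P ι R D))) : Set (TimedWord (Sig P ι R D)) :=
  {v | RefinesTW w v.seq}

/-- Observational soundness of a sequence of verdict sets. -/
def ObsSound [DecidableEq V] (φ : Formula P ι V R)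
    (ws : ℕ → List (Letter (Sig P ι R D))) (Vs : ℕ → Set (Q × Bool)) : Prop :=
  ∀ (ν : V → Option D) (i : ℕ) (τ : Q) (b : Bool),
    (τ, b) ∈ Vs i → osemE (ws i) φ τ ν = Tri.ofBool b

/-- Observational completeness of a sequence of verdict sets. -/
def ObsComplete [DecidableEq V] (φ : Formula P ι V R)
    (ws : ℕ → List (Letter (Sig P ι R D))) (Vs : ℕ → Set (Q × Bool)) : Prop :=
  ∀ (ν : V → Option D) (i : ℕ) (τ : Q),
    (osemE (ws i) φ τ ν).IsBool → ∃ b : Bool, ∃ j ≤ i, (τ, b) ∈ Vs j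

/-- Soundness of a sequence of verdict sets. -/
def Sound (φ : Formula P ι V R)
    (ws : ℕ → List (Letter (Sig P ι R D))) (Vs : ℕ → Set (Q × Bool)) : Prop :=
  ∀ (ν : V → D) (i : ℕ) (τ : Q) (b : Bool), (τ, b) ∈ Vs i →
    meetOver (UW (ws i)) (fun v => bsemE v.seq φ τ fun x => some (ν x)) = Tri.ofBool b

/-- Completeness of a sequence of verdict sets. -/
def Complete (φ : Formula P ι V R)
    (ws : ℕ → List (Letter (Sig P ι R D))) (Vs : ℕ → Set (Q × Bool)) : Prop :=
  ∀ (ν : V → D) (i : ℕ) (τ : Q),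
    (meetOver (UW (ws i)) (fun v => bsemE v.seq φ τ fun x => some (ν x))).IsBool →
    ∃ b : Bool, ∃ j ≤ i, (τ, b) ∈ Vs j

end RV
namespace RV

/-! ## Propositional formulas and the reduction to propositional logic -/

/-- Propositional formulas over atoms `A`. -/
inductive PForm (A : Type*) : Type _
  | tr : PForm A
  | fa : PForm A
  | var (a : A) : PForm A
  | neg (φ : PForm A) : PForm A
  | and (φ ψ : PForm A) : PForm A
  | or (φ ψ : PForm A) : PForm A
  | imp (φ ψ : PForm A) : PForm A

namespace PForm

def eval {A : Type*} (v : A → Bool) : PForm A → Bool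
  | tr => true
  | fa => false
  | var a => v a
  | neg φ => ! φ.eval v
  | and φ ψ => φ.eval v && ψ.eval v
  | or φ ψ => φ.eval v || ψ.eval v
  | imp φ ψ => (! φ.eval v) || ψ.eval v

/-- Apply a substitution of Boolean constants for some of the atoms. -/
def applyS {A : Type*} (θ : A → Option Bool) : PForm A → PForm A
  | tr => tr
  | fa => fa
  | var a => match θ a with
      | some true => tr
      | some false => fa
      | none => var a
  | neg φ => neg (φ.applyS θ)
  | and φ ψ => and (φ.applyS θ) (ψ.applyS θ)
  | or φ ψ => or (φ.applyS θ) (ψ.applyS θ)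
  | imp φ ψ => imp (φ.applyS θ) (ψ.applyS θ)

def ofBool {A : Type*} : Bool → PForm A
  | true => tr
  | false => fa

end PForm

/-- Semantic equivalence of propositional formulas. -/
def PEquiv {A : Type*} (φ ψ : PForm A) : Prop := ∀ v : A → Bool, φ.eval v = ψ.eval v

def pOr {A : Type*} (l : List (PForm A)) : PForm A := l.foldr PForm.or PForm.fa
def pAnd {A : Type*} (l : List (PForm A)) : PForm A := l.foldr PForm.and PForm.tr

/-- The substitution replacing the single atom `a` by the constant `c`. -/
noncomputable def substOne {A : Type*} (a : A) (c : Bool) : A → Option Bool :=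
  fun b => if b = a then some c else none

/-- A propositional formula `Θ` depends on an atom `a` if `[a↦t]Θ ≢ [a↦f]Θ`. -/
def Depends {A : Type*} (Θ : PForm A) (a : A) : Prop :=
  ¬ PEquiv (Θ.applyS (substOne a true)) (Θ.applyS (substOne a false))

variable {P : Type} {ι : P → ℕ} {V R D : Type}

/-- Atoms of the propositional formulas `Ψ_w^{γ,J,ν}`: propositions `α^{K,μ}`,
`tp^K`, `t̄p^K`, and `mc_I^{H,K}` (intervals named by their positions in `w`). -/
inductive DAtom (P : Type) (ι : P → ℕ) (V R D : Type) : Type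
  | sub (α : Formula P ι V R) (k : ℕ) (μ : V → Option D) : DAtom P ι V R D
  | tp (k : ℕ) : DAtom P ι V R D
  | tpbar (k : ℕ) : DAtom P ι V R D
  | mc (I : Set Q) (h k : ℕ) : DAtom P ι V R D

/-- The propositional formula `Ψ_w^{γ,J,ν}` (with the extra anchor conjuncts
`t̄p^K → α^{K,ν}` for `S_I` and `U_I`). -/
noncomputable def PsiD [DecidableEq V] (w : List (Letter (Sig P ι R D))) :
    Formula P ι V R → ℕ → (V → Option D) → PForm (DAtom P ι V R D)
  | .tt, _, _ => .tr
  | .pred p args, j, ν => .var (.sub (.pred p args) j ν)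
  | .freeze r x φ, j, ν => .var (.sub φ j (Function.update ν x ((letAt botSig w j).2 r)))
  | .neg φ, j, ν => .neg (.var (.sub φ j ν))
  | .or φ ψ, j, ν => .or (.var (.sub φ j ν)) (.var (.sub ψ j ν))
  | .since I φ ψ, j, ν =>
      pOr ((List.range (j + 1)).map fun k =>
        .and (.var (.tp k)) (.and (.var (.mc I.1 j k)) (.and (.var (.sub ψ k ν))
          (.and (.imp (.var (.tpbar k)) (.var (.sub φ k ν)))
            (pAnd ((List.range' (k + 1) (j - k)).map fun h =>
              .imp (.var (.tp h)) (.var (.sub φ h ν))))))))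
  | .until I φ ψ, j, ν =>
      pOr ((List.range' j (w.length - j)).map fun k =>
        .and (.var (.tp k)) (.and (.var (.mc I.1 k j)) (.and (.var (.sub ψ k ν))
          (.and (.imp (.var (.tpbar k)) (.var (.sub φ k ν)))
            (pAnd ((List.range' j (k - j)).map fun h =>
              .imp (.var (.tp h)) (.var (.sub φ h ν))))))))
  | .prev I φ, j, ν =>
      .or (if I.1 ≠ ({0} : Set Q) then
              .and (.var (.mc I.1 j j)) (.and (.var (.sub φ j ν)) (.neg (.var (.tp j))))
            else .fa)
        (.or (if 1 ≤ j then
                .and (.var (.mc I.1 j (j - 1))) (.and (.var (.sub φ (j - 1) ν))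
                  (.and (.var (.tp (j - 1))) (.var (.tp j))))
              else .fa)
          (if 2 ≤ j then
              .and (.var (.mc I.1 j (j - 2))) (.and (.var (.sub φ (j - 2) ν))
                (.neg (.var (.tp (j - 1)))))
            else .fa))
  | .next I φ, j, ν =>
      .or (if I.1 ≠ ({0} : Set Q) then
              .and (.var (.mc I.1 j j)) (.and (.var (.sub φ j ν)) (.neg (.var (.tp j))))
            else .fa)
        (.or (if j + 1 < w.length then
                .and (.var (.mc I.1 (j + 1) j)) (.and (.var (.sub φ (j + 1) ν))
                  (.and (.var (.tp (j + 1))) (.var (.tp j))))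
              else .fa)
          (if j + 2 < w.length then
              .and (.var (.mc I.1 (j + 2) j)) (.and (.var (.sub φ (j + 2) ν))
                (.neg (.var (.tp (j + 1)))))
            else .fa))

/-- The propositional formula `Φ_w^{γ,J,ν}` (without the extra anchor conjuncts). -/
noncomputable def PhiD [DecidableEq V] (w : List (Letter (Sig P ι R D))) :
    Formula P ι V R → ℕ → (V → Option D) → PForm (DAtom P ι V R D)
  | .since I φ ψ, j, ν =>
      pOr ((List.range (j + 1)).map fun k =>
        .and (.var (.tp k)) (.and (.var (.mc I.1 j k)) (.and (.var (.sub ψ k ν))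
          (pAnd ((List.range' (k + 1) (j - k)).map fun h =>
            .imp (.var (.tp h)) (.var (.sub φ h ν)))))))
  | .until I φ ψ, j, ν =>
      pOr ((List.range' j (w.length - j)).map fun k =>
        .and (.var (.tp k)) (.and (.var (.mc I.1 k j)) (.and (.var (.sub ψ k ν))
          (pAnd ((List.range' j (k - j)).map fun h =>
            .imp (.var (.tp h)) (.var (.sub φ h ν)))))))
  | γ, j, ν => PsiD w γ j ν

/-- The substitution `θ_w`. -/
noncomputable def thetaD [DecidableEq V] (w : List (Letter (Sig P ι R D))) :
    DAtom P ι V R D → Option Bool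
  | .sub α k μ =>
      match osem w α k μ with
      | .tt => some true
      | .ff => some false
      | .unk => none
  | .tp k => if ∃ τ : Q, ivAt w k = {τ} then some true else none
  | .tpbar k => if ∃ τ : Q, ivAt w k = {τ} then some false else none
  | .mc I h k =>
      if (ivSub (ivAt w h) (ivAt w k)).Nonempty ∧ ivSub (ivAt w h) (ivAt w k) ⊆ I then some true
      else if ivSub (ivAt w h) (ivAt w k) ∩ I = ∅ then some false
      else none

/-! ## Subformulas and relevant valuations -/

/-- `DirectSub ψ γ`: `ψ` is a direct subformula of `γ` (`γ` is `ψ`'s parent formula). -/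
inductive DirectSub : Formula P ι V R → Formula P ι V R → Prop
  | freeze (r : R) (x : V) (φ : Formula P ι V R) : DirectSub φ (.freeze r x φ)
  | neg (φ : Formula P ι V R) : DirectSub φ (.neg φ)
  | orl (φ ψ : Formula P ι V R) : DirectSub φ (.or φ ψ)
  | orr (φ ψ : Formula P ι V R) : DirectSub ψ (.or φ ψ)
  | prev (I : Iv) (φ : Formula P ι V R) : DirectSub φ (.prev I φ)
  | next (I : Iv) (φ : Formula P ι V R) : DirectSub φ (.next I φ)
  | sincel (I : Iv) (φ ψ : Formula P ι V R) : DirectSub φ (.since I φ ψ)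
  | sincer (I : Iv) (φ ψ : Formula P ι V R) : DirectSub ψ (.since I φ ψ)
  | untill (I : Iv) (φ ψ : Formula P ι V R) : DirectSub φ (.until I φ ψ)
  | untilr (I : Iv) (φ ψ : Formula P ι V R) : DirectSub ψ (.until I φ ψ)

/-- `ψ` is a subformula of `φ`. -/
def SubfOf (ψ φ : Formula P ι V R) : Prop := Relation.ReflTransGen DirectSub ψ φ

/-- `ψ` is a proper subformula of `φ`. -/
def ProperSubf (ψ φ : Formula P ι V R) : Prop := Relation.TransGen DirectSub ψ φ

/-- The list of all subformula occurrences of a formula. -/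
def subList : Formula P ι V R → List (Formula P ι V R)
  | .tt => [.tt]
  | .pred p args => [.pred p args]
  | .freeze r x φ => .freeze r x φ :: subList φ
  | .neg φ => .neg φ :: subList φ
  | .or φ ψ => .or φ ψ :: (subList φ ++ subList ψ)
  | .prev I φ => .prev I φ :: subList φ
  | .next I φ => .next I φ :: subList φ
  | .since I φ ψ => .since I φ ψ :: (subList φ ++ subList ψ)
  | .until I φ ψ => .until I φ ψ :: (subList φ ++ subList ψ)

/-- The list of variables frozen in a formula (with multiplicity). -/
def frozenVarsL : Formula P ι V R → List V
  | .tt => []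
  | .pred _ _ => []
  | .freeze _ x φ => x :: frozenVarsL φ
  | .neg φ => frozenVarsL φ
  | .or φ ψ => frozenVarsL φ ++ frozenVarsL ψ
  | .prev _ φ => frozenVarsL φ
  | .next _ φ => frozenVarsL φ
  | .since _ φ ψ => frozenVarsL φ ++ frozenVarsL ψ
  | .until _ φ ψ => frozenVarsL φ ++ frozenVarsL ψ

/-- The list of registers occurring in a formula (with multiplicity). -/
def regsL : Formula P ι V R → List R
  | .tt => []
  | .pred _ _ => []
  | .freeze r _ φ => r :: regsL φ
  | .neg φ => regsL φ
  | .or φ ψ => regsL φ ++ regsL ψ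
  | .prev _ φ => regsL φ
  | .next _ φ => regsL φ
  | .since _ φ ψ => regsL φ ++ regsL ψ
  | .until _ φ ψ => regsL φ ++ regsL ψ

/-- The set `val_w(ψ,J)` of relevant valuations, as an inductively defined relation:
`RelVal φ w ψ j ν` means `ν ∈ val_w(ψ, J)` where `J` is the interval at position `j`. -/
inductive RelVal [DecidableEq V] (φ : Formula P ι V R) (w : List (Letter (Sig P ι R D))) :
    Formula P ι V R → ℕ → (V → Option D) → Prop
  | root (j : ℕ) (hj : j < w.length) : RelVal φ w φ j (fun _ => none)
  | child {ψ γ : Formula P ι V R} {j k : ℕ} {ν μ : V → Option D}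
      (hψ : ψ ≠ φ) (hd : DirectSub ψ γ) (hγ : SubfOf γ φ)
      (hrel : RelVal φ w γ k μ)
      (hdep : Depends ((PsiD w γ k μ).applyS (thetaD w)) (DAtom.sub ψ j ν)) :
      RelVal φ w ψ j ν

end RV
namespace RV

/-! ## Quantified Boolean formulas and the reduction -/

/-- Quantified Boolean formulas over propositions `p₁, …, pₙ`. -/
inductive QBF (n : ℕ) : Type
  | var (i : Fin n) : QBF n
  | neg (φ : QBF n) : QBF n
  | or (φ ψ : QBF n) : QBF n
  | ex (i : Fin n) (φ : QBF n) : QBF n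
  | all (i : Fin n) (φ : QBF n) : QBF n

namespace QBF

/-- Standard semantics of quantified Boolean logic. -/
def sat {n : ℕ} : QBF n → (Fin n → Bool) → Prop
  | var i, v => v i = true
  | neg φ, v => ¬ φ.sat v
  | or φ ψ, v => φ.sat v ∨ ψ.sat v
  | ex i φ, v => ∃ b : Bool, φ.sat (Function.update v i b)
  | all i φ, v => ∀ b : Bool, φ.sat (Function.update v i b)

/-- Free propositions of a QBF formula. -/
def free {n : ℕ} : QBF n → Set (Fin n)
  | var i => {i}
  | neg φ => φ.free
  | or φ ψ => φ.free ∪ ψ.free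
  | ex i φ => φ.free \ {i}
  | all i φ => φ.free \ {i}

def Satisfiable {n : ℕ} (φ : QBF n) : Prop := ∃ v : Fin n → Bool, φ.sat v

end QBF

/-! ### Intervals used in the reduction and syntactic sugar -/

theorem isInterval_univ : IsInterval (Set.univ : Set Q) :=
  ⟨⟨0, trivial⟩, fun _ _ _ _ _ _ _ => trivial⟩

theorem isInterval_Icc01 : IsInterval (Set.Icc (0 : Q) 1) := by
  constructor
  · exact ⟨0, by simp⟩
  · rintro a ⟨-, -⟩ b ⟨-, hb⟩ c hac hcb
    exact ⟨zero_le, le_trans hcb hb⟩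

theorem isInterval_singleton (τ : Q) : IsInterval ({τ} : Set Q) := by
  constructor
  · exact ⟨τ, rfl⟩
  · rintro a ha b hb c hac hcb
    simp only [Set.mem_singleton_iff] at *
    subst ha; subst hb
    exact le_antisymm hcb hac

theorem isInterval_Ioi (τ : Q) : IsInterval (Set.Ioi τ) := by
  constructor
  · exact ⟨τ + 1, by simp⟩
  · rintro a ha b hb c hac hcb
    exact lt_of_lt_of_le ha hac

/-- The interval `[0,∞)`. -/
def ivFull : Iv := ⟨Set.univ, isInterval_univ⟩

/-- The interval `[0,1]`. -/
def iv01 : Iv := ⟨Set.Icc 0 1, isInterval_Icc01⟩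

/-- `eventually_I φ := t U_I φ`. -/
def evtl {P : Type} {ι : P → ℕ} {V R : Type} (I : Iv) (φ : Formula P ι V R) :
    Formula P ι V R :=
  .until I .tt φ

/-- `once φ := t S_{[0,∞)} φ`. -/
def once {P : Type} {ι : P → ℕ} {V R : Type} (φ : Formula P ι V R) : Formula P ι V R :=
  .since ivFull .tt φ

/-- `always_I φ := ¬ eventually_I ¬φ`. -/
def alws {P : Type} {ι : P → ℕ} {V R : Type} (I : Iv) (φ : Formula P ι V R) :
    Formula P ι V R :=
  .neg (evtl I (.neg φ))

/-- `historically φ := ¬ once ¬φ`. -/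
def hist {P : Type} {ι : P → ℕ} {V R : Type} (φ : Formula P ι V R) : Formula P ι V R :=
  .neg (once (.neg φ))

/-- The translation `α ↦ α*` of QBF formulas into MTL↓ formulas. -/
def qbfTrans {n : ℕ} : QBF n → Formula (Fin n) (fun _ => 1) (Fin n) Unit
  | .var i => .pred i (fun _ => i)
  | .neg φ => .neg (qbfTrans φ)
  | .or φ ψ => .or (qbfTrans φ) (qbfTrans ψ)
  | .ex i φ => once (evtl iv01 (.freeze () i (qbfTrans φ)))
  | .all i φ => hist (alws iv01 (.freeze () i (qbfTrans φ)))

/-- The interpretation `σ` of the reduction: `σ(Pᵢ) = {1}` for each `i`. -/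
def sigQBF (n : ℕ) : (p : Fin n) → Option (Set (Fin 1 → Fin 2)) :=
  fun _ => some {fun _ => 1}

/-- The observation `w` of the reduction. -/
def wQBF (n : ℕ) : List (Letter (Sig (Fin n) (fun _ => 1) Unit (Fin 2))) :=
  [ (({0} : Set Q), (sigQBF n, fun _ => some 0)),
    (({1} : Set Q), (sigQBF n, fun _ => some 1)),
    (({3} : Set Q), botSig),
    (Set.Ioi 3, botSig) ]

end RV

/-!
Each transformation (T1)–(T3) replaces one letter by letters whose intervals lie inside its
interval and are ordered left to right, so the intervals of an observation are pairwise strictly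
ordered. Hence a position whose interval contains `τ_j` can only move right as the timestamps
increase, and any choice of such positions is already the monotone map.
-/

namespace RV

def Before {A : Type*} (p q : Letter A) : Prop :=
  ∀ τ ∈ p.1, ∀ τ' ∈ q.1, τ < τ'

lemma mem_ivAt_iff {A : Type*} {w : List (Letter A)} {i : ℕ} {τ : Q} :
    τ ∈ ivAt w i ↔ ∃ h : i < w.length, τ ∈ w[i].1 := by
  unfold ivAt
  by_cases h : i < w.length <;> simp [h]

lemma pairwise_before_replace {A : Type*} {u v l : List (Letter A)} {x : Letter A}
    (hx : (u ++ x :: v).Pairwise Before) (hsub : ∀ y ∈ l, y.1 ⊆ x.1)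
    (hl : l.Pairwise Before) : (u ++ l ++ v).Pairwise Before := by
  simp only [List.pairwise_append, List.pairwise_cons, List.mem_append, List.mem_cons] at hx ⊢
  obtain ⟨hu, ⟨hxv, hv⟩, hux⟩ := hx
  refine ⟨⟨hu, hl, fun a ha b hb τ hτ τ' hτ' => hux a ha x (.inl rfl) τ hτ τ' (hsub b hb hτ')⟩,
    hv, ?_⟩
  rintro a (ha | ha) b hb
  · exact hux a ha b (.inr hb)
  · exact fun τ hτ => hxv b hb τ (hsub a ha hτ)

lemma Step.pairwise_before {A : Type*} {lt : A → A → Prop} {w w' : List (Letter A)}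
    (hs : Step lt w w') (hw : w.Pairwise Before) : w'.Pairwise Before := by
  cases hs with
  | split u v I a τ _ hτ _ =>
    simpa using pairwise_before_replace (l := [(I ∩ Set.Iio τ, a), ({τ}, a), (I ∩ Set.Ioi τ, a)])
      hw (by simp [Set.inter_subset_left, hτ])
      (by simpa [Before] using fun _ _ h _ _ h' => h.trans h')
  | split0 u v I a _ h0 =>
    simpa using pairwise_before_replace (l := [({0}, a), (I ∩ Set.Ioi 0, a)])
      hw (by simp [Set.inter_subset_left, h0]) (by simp [Before])
  | remove u v I a _ _ =>
    simpa using pairwise_before_replace (l := []) hw (by simp) .nil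
  | data u v τ a a' _ =>
    simpa using pairwise_before_replace (l := [({τ}, a')]) hw (by simp) (by simp)

lemma Obs.pairwise_before {A : Type*} {lt : A → A → Prop} {a0 : A} {w : List (Letter A)}
    (h : Obs lt a0 w) : w.Pairwise Before := by
  induction h with
  | base => simp
  | step _ hs ih => exact hs.pairwise_before ih

lemma monotone_of_mem_ivAt {A α : Type*} [Preorder α] {w : List (Letter A)}
    (hw : w.Pairwise Before) {t : α → Q} (ht : Monotone t) {f : α → ℕ}
    (hf : ∀ j, t j ∈ ivAt w (f j)) : Monotone f := by
  intro j j' hjj'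
  by_contra! hlt
  obtain ⟨hj, hτ⟩ := mem_ivAt_iff.1 (hf j)
  obtain ⟨hj', hτ'⟩ := mem_ivAt_iff.1 (hf j')
  exact (ht hjj').not_gt (List.pairwise_iff_getElem.1 hw _ _ hj' hj hlt _ hτ' _ hτ)

theorem refinesTW_monotone_map_general
    {P : Type} {ι : P → ℕ} {R D : Type}
    (u : List (Letter (Sig P ι R D))) (hu : Obs sigLt botSig u)
    (v : TimedWord (Sig P ι R D)) (huv : RefinesTW u v.seq) :
    ∃ π : ℕ → Fin u.length, Monotone π ∧
      ∀ j : ℕ, (v.seq j).1 ∈ ivAt u (π j : ℕ) ∧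
        sigLe (letAt botSig u (π j : ℕ)) ((v.seq j).2) := by
  choose f hlen hmem hle using huv
  have hmono : Monotone f := monotone_of_mem_ivAt hu.pairwise_before v.strictMono.monotone hmem
  exact ⟨fun j => ⟨f j, hlen j⟩, fun _ _ h => Fin.mk_le_mk.2 (hmono h), fun j => ⟨hmem j, hle j⟩⟩

/-- if a timed word `v` refines an observation `u`, there is a monotone
map `π : ℕ → pos(u)` with `τ_j ∈ I_{π(j)}`, `σ_{π(j)} ⊑ σ'_j`, and `ρ_{π(j)} ⊑ ρ'_j`. -/
theorem refinesTW_monotone_map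
    {P : Type} {ι : P → ℕ} {R D : Type} [Nonempty D]
    (u : List (Letter (Sig P ι R D))) (hu : Obs sigLt botSig u)
    (v : TimedWord (Sig P ι R D)) (huv : RefinesTW u v.seq) :
    ∃ π : ℕ → Fin u.length, Monotone π ∧
      ∀ j : ℕ, (v.seq j).1 ∈ ivAt u (π j : ℕ) ∧
        sigLe (letAt botSig u (π j : ℕ)) ((v.seq j).2) :=
  refinesTW_monotone_map_general u hu v huv

end RV
end

section
/- If w and w' are observations over Σ with w ⊑ w', with letters (Iᵢ,(σᵢ,ρᵢ)) for i ∈ pos(w) and (I'_j,(σ'_j,ρ'_j)) for j ∈ pos(w'), then there exists a monotone function π : pos(w') → pos(w) such that for all j ∈ pos(w'): I'_j ⊆ I_{π(j)}, σ_{π(j)} ⊑ σ'_j, and ρ_{π(j)} ⊑ ρ'_j. -/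
open scoped Classical

namespace RV

/-
Each transformation replaces a single letter `(I, a)` by a block of letters (empty for (T2))
whose intervals lie in `I` and whose labels extend `a`. Sending that block to the position of
`(I, a)` and shifting the positions around it is a monotone map with the required properties,
and such maps compose along a chain of transformations.
-/

section

variable {α : Type*} {r : α → α → Prop}

def MonoCovers (r : α → α → Prop) (w w' : List α) : Prop :=
  ∃ π : Fin w'.length → Fin w.length, Monotone π ∧ ∀ j, r w[π j] w'[j]

namespace MonoCovers

theorem refl [Std.Refl r] (w : List α) : MonoCovers r w w :=
  ⟨id, monotone_id, fun _ => _root_.refl _⟩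

theorem trans [IsTrans α r] {w₁ w₂ w₃ : List α} :
    MonoCovers r w₁ w₂ → MonoCovers r w₂ w₃ → MonoCovers r w₁ w₃
  | ⟨π₁, hπ₁, h₁⟩, ⟨π₂, hπ₂, h₂⟩ =>
    ⟨π₁ ∘ π₂, hπ₁.comp hπ₂, fun j => _root_.trans (h₁ (π₂ j)) (h₂ j)⟩

theorem singleton_left {x : α} {m : List α} (h : ∀ y ∈ m, r x y) : MonoCovers r [x] m :=
  ⟨fun _ => ⟨0, Nat.one_pos⟩, monotone_const, fun j => h _ (List.getElem_mem j.isLt)⟩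

theorem append {w₁ w₂ w₁' w₂' : List α} :
    MonoCovers r w₁ w₁' → MonoCovers r w₂ w₂' → MonoCovers r (w₁ ++ w₂) (w₁' ++ w₂')
  | ⟨π₁, hπ₁, h₁⟩, ⟨π₂, hπ₂, h₂⟩ => by
    have hlt₁ := fun j => (π₁ j).isLt
    have hlt₂ := fun j => (π₂ j).isLt
    let π : Fin (w₁' ++ w₂').length → Fin (w₁ ++ w₂).length := fun j =>
      if hj : (j : ℕ) < w₁'.length then ⟨π₁ ⟨j, hj⟩, by grind⟩
      else ⟨w₁.length + π₂ ⟨j - w₁'.length, by grind⟩, by grind⟩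
    refine ⟨π, fun a b hab => ?_, fun j => ?_⟩
    · simp only [π, Fin.le_def] at hab ⊢
      split_ifs
      · exact hπ₁ (Fin.mk_le_mk.mpr hab)
      · grind
      · omega
      · simpa using hπ₂ (Fin.mk_le_mk.mpr (Nat.sub_le_sub_right hab _))
    · simp only [π]
      split_ifs with hj
      · simpa [List.getElem_append, hj] using h₁ ⟨j, hj⟩
      · simpa [List.getElem_append, hj] using h₂ ⟨j - w₁'.length, by grind⟩

theorem replace [Std.Refl r] (u v : List α) {x : α} {m : List α} (h : ∀ y ∈ m, r x y) :
    MonoCovers r (u ++ x :: v) (u ++ m ++ v) := by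
  simpa only [List.append_assoc, List.singleton_append] using
    ((refl u).append (singleton_left h)).append (refl v)

end MonoCovers

end

section Letters

variable {A : Type*} {lt : A → A → Prop}

def LetterLE (lt : A → A → Prop) (ℓ ℓ' : Letter A) : Prop :=
  ℓ'.1 ⊆ ℓ.1 ∧ Relation.ReflTransGen lt ℓ.2 ℓ'.2

instance : Std.Refl (LetterLE lt) :=
  ⟨fun _ => ⟨subset_rfl, .refl⟩⟩

instance : IsTrans (Letter A) (LetterLE lt) :=
  ⟨fun _ _ _ h₁ h₂ => ⟨h₂.1.trans h₁.1, h₁.2.trans h₂.2⟩⟩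

theorem Step.monoCovers {w w' : List (Letter A)} (h : Step lt w w') :
    MonoCovers (LetterLE lt) w w' := by
  cases h with
  | split u v I a τ _ hτ =>
    simpa using MonoCovers.replace (m := [(I ∩ Set.Iio τ, a), ({τ}, a), (I ∩ Set.Ioi τ, a)]) u v
      (by simp [LetterLE, hτ, Relation.ReflTransGen.refl])
  | split0 u v I a _ h0 =>
    simpa using MonoCovers.replace (m := [({0}, a), (I ∩ Set.Ioi 0, a)]) u v
      (by simp [LetterLE, h0, Relation.ReflTransGen.refl])
  | remove u v I a =>
    simpa using MonoCovers.replace (m := []) (x := (I, a)) (r := LetterLE lt) u v (by simp)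
  | data u v τ a a' hlt =>
    simpa using MonoCovers.replace (m := [({τ}, a')]) u v (by simpa [LetterLE] using .single hlt)

theorem Refines.monoCovers {w w' : List (Letter A)} (h : Refines lt w w') :
    MonoCovers (LetterLE lt) w w' := by
  induction h with
  | refl => exact .refl w
  | tail _ hstep ih => exact ih.trans hstep.monoCovers

theorem ivAt_of_lt {w : List (Letter A)} {i : ℕ} (hi : i < w.length) : ivAt w i = w[i].1 := by
  simp [ivAt, hi]

theorem letAt_of_lt (a0 : A) {w : List (Letter A)} {i : ℕ} (hi : i < w.length) :
    letAt a0 w i = w[i].2 := by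
  simp [letAt, hi]

end Letters

theorem sigLe_of_reflTransGen {P : Type} {ι : P → ℕ} {R D : Type} {s s' : Sig P ι R D}
    (h : Relation.ReflTransGen sigLt s s') : sigLe s s' := by
  induction h with
  | refl => exact ⟨fun _ _ => id, fun _ _ => id⟩
  | tail _ hlt ih =>
    exact ⟨fun p b hb => hlt.1.1 p b (ih.1 p b hb), fun x b hb => hlt.1.2 x b (ih.2 x b hb)⟩

theorem refines_monotone_map_general
    {P : Type} {ι : P → ℕ} {R D : Type}
    (w w' : List (Letter (Sig P ι R D)))
    (hww' : Refines sigLt w w') :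
    ∃ π : Fin w'.length → Fin w.length, Monotone π ∧
      ∀ j : Fin w'.length,
        ivAt w' (j : ℕ) ⊆ ivAt w (π j : ℕ) ∧
        sigLe (letAt botSig w (π j : ℕ)) (letAt botSig w' (j : ℕ)) := by
  obtain ⟨π, hπ, hle⟩ := hww'.monoCovers
  refine ⟨π, hπ, fun j => ?_⟩
  rw [ivAt_of_lt j.isLt, ivAt_of_lt (π j).isLt, letAt_of_lt _ j.isLt, letAt_of_lt _ (π j).isLt]
  exact ⟨(hle j).1, sigLe_of_reflTransGen (hle j).2⟩

/-- if `w ⊑ w'` are observations, there is a monotone map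
`π : pos(w') → pos(w)` with `I'_j ⊆ I_{π(j)}`, `σ_{π(j)} ⊑ σ'_j`, and `ρ_{π(j)} ⊑ ρ'_j`. -/
theorem refines_monotone_map
    {P : Type} {ι : P → ℕ} {R D : Type} [Nonempty D]
    (w w' : List (Letter (Sig P ι R D)))
    (hw : Obs sigLt botSig w) (hw' : Obs sigLt botSig w')
    (hww' : Refines sigLt w w') :
    ∃ π : Fin w'.length → Fin w.length, Monotone π ∧
      ∀ j : Fin w'.length,
        ivAt w' (j : ℕ) ⊆ ivAt w (π j : ℕ) ∧
        sigLe (letAt botSig w (π j : ℕ)) (letAt botSig w' (j : ℕ)) :=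
  refines_monotone_map_general w w' hww'

end RV
end

section
/- Let α be a closed quantified Boolean formula over propositions p₁,…,pₙ. Take P = {P₁,…,Pₙ} with each Pᵢ of arity 1, R = {r}, D = {0,1}, and let w be the observation ({0},(σ,ρ₀))({1},(σ,ρ₁))({3},(∅,∅))((3,∞),(∅,∅)), where σ(Pᵢ) = {1} for each i ∈ {1,…,n} and ρ_b(r) = b for b ∈ {0,1}. Define the translation α* of quantified Boolean formulas into MTL↓ by pᵢ* := Pᵢ(xᵢ), (¬β)* := ¬β*, (β∨γ)* := β* ∨ γ*, (∃pᵢ.β)* := once(eventually_{[0,1]} ↓ʳxᵢ β*), and (∀pᵢ.β)* := historically(always_{[0,1]} ↓ʳxᵢ β*). Then α is satisfiable if and only if ⟦w,0,∅⟧ᵉ(α*) = t. -/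
open scoped Classical

/-!
On `w` only the time points `0` and `1` lie within distance `1` of each other, and the
register holds `0` at the first and `1` at the second. Hence, at either of these two time
points, `once (eventually_{[0,1]} ↓ʳxᵢ φ)` is the Kleene disjunction of `↓ʳxᵢ φ` at both,
that is, of `φ` with `xᵢ` bound to `0` and to `1`; dually `historically (always_{[0,1]} …)`
is their conjunction. By induction on `α`, `α*` evaluates at these time points to the
Boolean truth value of `α` under the assignment read off the valuation; for closed `α` any
assignment will do.
-/

namespace RV

namespace Tri

noncomputable def ofProp (p : Prop) : Tri := if p then tt else ff

@[simp] theorem neg_neg (x : Tri) : x.neg.neg = x := by cases x <;> rfl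

@[simp] theorem neg_ofProp (p : Prop) : (ofProp p).neg = ofProp ¬p := by
  by_cases hp : p <;> simp [ofProp, hp, neg]

@[simp] theorem ofProp_kor_ofProp (p q : Prop) : (ofProp p).kor (ofProp q) = ofProp (p ∨ q) := by
  by_cases hp : p <;> by_cases hq : q <;> simp [ofProp, hp, hq, kor]

@[simp] theorem ofProp_kand_ofProp (p q : Prop) :
    (ofProp p).kand (ofProp q) = ofProp (p ∧ q) := by
  by_cases hp : p <;> by_cases hq : q <;> simp [ofProp, hp, hq, kand]

@[simp] theorem ofProp_true : ofProp True = tt := if_pos trivial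

@[simp] theorem ofProp_false : ofProp False = ff := if_neg id

@[simp] theorem tt_kand (x : Tri) : tt.kand x = x := rfl

@[simp] theorem kand_tt (x : Tri) : x.kand tt = x := by cases x <;> rfl

@[simp] theorem ff_kand (x : Tri) : ff.kand x = ff := rfl

@[simp] theorem kand_ff (x : Tri) : x.kand ff = ff := by cases x <;> rfl

@[simp] theorem kor_ff (x : Tri) : x.kor ff = x := by cases x <;> rfl

@[simp] theorem kimp_tt (x : Tri) : x.kimp tt = tt := by cases x <;> rfl

theorem ofProp_eq_tt {p : Prop} : ofProp p = tt ↔ p := by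
  by_cases hp : p <;> simp [ofProp, hp]

end Tri

@[simp] theorem kOrList_nil : kOrList [] = Tri.ff := rfl

@[simp] theorem kOrList_cons (x : Tri) (l : List Tri) : kOrList (x :: l) = x.kor (kOrList l) :=
  rfl

@[simp] theorem kAndList_nil : kAndList [] = Tri.tt := rfl

@[simp] theorem kAndList_cons (x : Tri) (l : List Tri) :
    kAndList (x :: l) = x.kand (kAndList l) :=
  rfl

section Semantics

variable {P : Type} {ι : P → ℕ} {V R D : Type} [DecidableEq V]
  {w : List (Letter (Sig P ι R D))}

@[simp] theorem osem_neg (φ : Formula P ι V R) (i : ℕ) (ν : V → Option D) :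
    osem w (.neg φ) i ν = (osem w φ i ν).neg :=
  rfl

@[simp] theorem osem_or (φ ψ : Formula P ι V R) (i : ℕ) (ν : V → Option D) :
    osem w (.or φ ψ) i ν = (osem w φ i ν).kor (osem w ψ i ν) :=
  rfl

theorem osem_pred_of_eq_some {p : P} {args : Fin (ι p) → V} {i : ℕ} {ν : V → Option D}
    {S : Set (Fin (ι p) → D)} {f : Fin (ι p) → D} (hS : (letAt botSig w i).1 p = some S)
    (hν : ∀ k, ν (args k) = some (f k)) :
    osem w (.pred p args) i ν = Tri.ofProp (f ∈ S) := by
  have hunique : ∀ (S' : Set (Fin (ι p) → D)) (f' : Fin (ι p) → D),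
      (letAt botSig w i).1 p = some S' → (∀ k, ν (args k) = some (f' k)) → S' = S ∧ f' = f :=
    fun S' f' hS' hν' => ⟨Option.some_injective _ (hS'.symm.trans hS),
      funext fun k => Option.some_injective _ ((hν' k).symm.trans (hν k))⟩
  by_cases hf : f ∈ S
  · rw [osem, if_pos ⟨S, f, hS, hν, hf⟩, Tri.ofProp, if_pos hf]
  · rw [osem, if_neg, if_pos ⟨S, f, hS, hν, hf⟩, Tri.ofProp, if_neg hf]
    rintro ⟨S', f', hS', hν', hf'⟩
    obtain ⟨rfl, rfl⟩ := hunique S' f' hS' hν'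
    exact hf hf'

end Semantics

section Observation

variable {A : Type*} {w : List (Letter A)}

theorem tp_of_ivAt_eq_singleton {i : ℕ} {a : Q} (h : ivAt w i = {a}) : tp w i = Tri.tt :=
  if_pos ⟨a, h⟩

theorem ivSub_singleton_singleton {a b d : Q} (h : b + d = a) :
    ivSub ({a} : Set Q) {b} = {d} := by
  ext e
  simp only [ivSub, Set.mem_singleton_iff, exists_eq_left, Set.mem_ofPred_eq]
  exact ⟨fun he => add_left_cancel (he.trans h.symm), fun he => he ▸ h⟩

theorem mc_of_ivAt_eq_singleton {I : Set Q} {i j : ℕ} {a b d : Q} (hi : ivAt w i = {a})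
    (hj : ivAt w j = {b}) (h : b + d = a) : mc w I i j = Tri.ofProp (d ∈ I) := by
  rw [mc, hi, hj, ivSub_singleton_singleton h, Tri.ofProp]
  by_cases hd : d ∈ I <;> simp [hd]

theorem mc_of_ivAt_eq_Ioi {I : Set Q} {i j : ℕ} {a b : Q} (hi : ivAt w i = Set.Ioi a)
    (hj : ivAt w j = {b}) (h : ∀ d ∈ I, b + d ≤ a) : mc w I i j = Tri.ff := by
  have hempty : ivSub (ivAt w i) (ivAt w j) ∩ I = ∅ := by
    rw [Set.eq_empty_iff_forall_notMem]
    rintro d ⟨⟨τ, hτ, τ', hτ', hd⟩, hdI⟩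
    rw [hi, Set.mem_Ioi] at hτ
    rw [hj, Set.mem_singleton_iff] at hτ'
    subst hτ' hd
    exact not_lt_of_ge (h d hdI) hτ
  rw [mc, if_neg, if_pos hempty]
  rintro ⟨⟨d, hd⟩, hsub⟩
  exact (Set.eq_empty_iff_forall_notMem.mp hempty) d ⟨hd, hsub hd⟩

end Observation

theorem update_eq_some_comp_update {α β : Type*} [DecidableEq α] {s : Set α} {ν : α → Option β}
    {v : α → Bool} (e : Bool → β) (i : α) (b : Bool) (h : ∀ k ∈ s \ {i}, ν k = some (e (v k))) :
    ∀ k ∈ s, Function.update ν i (some (e b)) k = some (e (Function.update v i b k)) := by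
  intro k hk
  by_cases hki : k = i
  · subst hki
    simp
  · simpa [hki] using h k ⟨hk, hki⟩

section Reduction

variable {n : ℕ}

@[simp] theorem ivAt_wQBF_zero : ivAt (wQBF n) 0 = {0} := rfl
@[simp] theorem ivAt_wQBF_one : ivAt (wQBF n) 1 = {1} := rfl
@[simp] theorem ivAt_wQBF_two : ivAt (wQBF n) 2 = {3} := rfl
@[simp] theorem ivAt_wQBF_three : ivAt (wQBF n) 3 = Set.Ioi 3 := rfl

@[simp] theorem length_wQBF : (wQBF n).length = 4 := rfl

theorem mc_wQBF_zero_zero (I : Set Q) : mc (wQBF n) I 0 0 = Tri.ofProp (0 ∈ I) :=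
  mc_of_ivAt_eq_singleton rfl rfl (add_zero 0)

theorem mc_wQBF_one_zero (I : Set Q) : mc (wQBF n) I 1 0 = Tri.ofProp (1 ∈ I) :=
  mc_of_ivAt_eq_singleton rfl rfl (zero_add 1)

theorem mc_wQBF_one_one (I : Set Q) : mc (wQBF n) I 1 1 = Tri.ofProp (0 ∈ I) :=
  mc_of_ivAt_eq_singleton rfl rfl (add_zero 1)

theorem mc_wQBF_two_zero (I : Set Q) : mc (wQBF n) I 2 0 = Tri.ofProp (3 ∈ I) :=
  mc_of_ivAt_eq_singleton rfl rfl (zero_add 3)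

theorem mc_wQBF_two_one (I : Set Q) : mc (wQBF n) I 2 1 = Tri.ofProp (2 ∈ I) :=
  mc_of_ivAt_eq_singleton rfl rfl (by norm_num)

theorem mc_Icc01_wQBF_three {j : ℕ} (hj : j ≤ 1) : mc (wQBF n) (Set.Icc 0 1) 3 j = Tri.ff := by
  interval_cases j
  · exact mc_of_ivAt_eq_Ioi rfl rfl fun d hd => by rw [zero_add]; exact hd.2.trans (by norm_num)
  · exact mc_of_ivAt_eq_Ioi rfl rfl fun d hd =>
      (add_le_add_right hd.2 1).trans (by norm_num : (1 : Q) + 1 ≤ 3)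

variable (ψ : Formula (Fin n) (fun _ => 1) (Fin n) Unit) (ν : Fin n → Option (Fin 2))

theorem osem_once_wQBF_zero : osem (wQBF n) (once ψ) 0 ν = osem (wQBF n) ψ 0 ν := by
  simp [once, osem, ivFull, mc_wQBF_zero_zero, tp_of_ivAt_eq_singleton]

theorem osem_once_wQBF_one :
    osem (wQBF n) (once ψ) 1 ν = (osem (wQBF n) ψ 0 ν).kor (osem (wQBF n) ψ 1 ν) := by
  simp [once, osem, ivFull, mc_wQBF_one_zero, mc_wQBF_one_one, tp_of_ivAt_eq_singleton,
    List.range_succ]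

theorem osem_evtl_iv01_wQBF_zero :
    osem (wQBF n) (evtl iv01 ψ) 0 ν = (osem (wQBF n) ψ 0 ν).kor (osem (wQBF n) ψ 1 ν) := by
  simp [evtl, osem, iv01, mc_wQBF_zero_zero, mc_wQBF_one_zero, mc_wQBF_two_zero,
    mc_Icc01_wQBF_three, tp_of_ivAt_eq_singleton, List.range'_succ]

theorem osem_evtl_iv01_wQBF_one :
    osem (wQBF n) (evtl iv01 ψ) 1 ν = osem (wQBF n) ψ 1 ν := by
  simp [evtl, osem, iv01, mc_wQBF_one_one, mc_wQBF_two_one,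
    mc_Icc01_wQBF_three, tp_of_ivAt_eq_singleton, List.range'_succ]

theorem osem_once_evtl_iv01_wQBF (b : Bool) :
    osem (wQBF n) (once (evtl iv01 ψ)) b.toNat ν =
      (osem (wQBF n) ψ false.toNat ν).kor (osem (wQBF n) ψ true.toNat ν) := by
  cases b
  · exact (osem_once_wQBF_zero _ _).trans (osem_evtl_iv01_wQBF_zero _ _)
  · simp only [Bool.toNat_false, Bool.toNat_true, osem_once_wQBF_one, osem_evtl_iv01_wQBF_zero,
      osem_evtl_iv01_wQBF_one]
    cases osem (wQBF n) ψ 0 ν <;> cases osem (wQBF n) ψ 1 ν <;> rfl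

theorem osem_hist_alws_iv01_wQBF (b : Bool) :
    osem (wQBF n) (hist (alws iv01 ψ)) b.toNat ν =
      (osem (wQBF n) ψ false.toNat ν).kand (osem (wQBF n) ψ true.toNat ν) := by
  cases b <;>
  simp only [hist, alws, osem_neg, Bool.toNat_false, Bool.toNat_true, osem_once_wQBF_zero,
    osem_once_wQBF_one, osem_evtl_iv01_wQBF_zero, osem_evtl_iv01_wQBF_one, Tri.neg_neg] <;>
  cases osem (wQBF n) ψ 0 ν <;> cases osem (wQBF n) ψ 1 ν <;> rfl

theorem letAt_wQBF_toNat (b : Bool) :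
    letAt botSig (wQBF n) b.toNat = (sigQBF n, fun _ => some (finTwoEquiv.symm b)) := by
  cases b <;> rfl

theorem osem_freeze_wQBF (i : Fin n) (b : Bool) :
    osem (wQBF n) (.freeze () i ψ) b.toNat ν =
      osem (wQBF n) ψ b.toNat (Function.update ν i (some (finTwoEquiv.symm b))) := by
  cases b <;> rfl

theorem osem_qbfTrans_wQBF (α : QBF n) (b : Bool) {ν : Fin n → Option (Fin 2)}
    {v : Fin n → Bool} (hν : ∀ i ∈ α.free, ν i = some (finTwoEquiv.symm (v i))) :
    osem (wQBF n) (qbfTrans α) b.toNat ν = Tri.ofProp (α.sat v) := by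
  induction α generalizing b ν v with
  | var i =>
    rw [qbfTrans, osem_pred_of_eq_some (by rw [letAt_wQBF_toNat]; rfl) fun _ => hν i rfl]
    congr 1
    simp only [QBF.sat, Set.mem_singleton_iff, funext_iff, Fin.forall_fin_one]
    cases v i <;> decide
  | neg φ ih => rw [qbfTrans, osem_neg, ih b hν, Tri.neg_ofProp]; rfl
  | or φ ψ ihφ ihψ =>
    rw [qbfTrans, osem_or, ihφ b fun i hi => hν i (Or.inl hi), ihψ b fun i hi => hν i (Or.inr hi),
      Tri.ofProp_kor_ofProp]
    rfl
  | ex i φ ih =>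
    rw [qbfTrans, osem_once_evtl_iv01_wQBF, osem_freeze_wQBF, osem_freeze_wQBF,
      ih false (update_eq_some_comp_update _ i false hν),
      ih true (update_eq_some_comp_update _ i true hν), Tri.ofProp_kor_ofProp, QBF.sat,
      Bool.exists_bool]
  | all i φ ih =>
    rw [qbfTrans, osem_hist_alws_iv01_wQBF, osem_freeze_wQBF, osem_freeze_wQBF,
      ih false (update_eq_some_comp_update _ i false hν),
      ih true (update_eq_some_comp_update _ i true hν), Tri.ofProp_kand_ofProp, QBF.sat,
      Bool.forall_bool]

theorem osemE_wQBF_zero (φ : Formula (Fin n) (fun _ => 1) (Fin n) Unit)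
    (ν : Fin n → Option (Fin 2)) : osemE (wQBF n) φ 0 ν = osem (wQBF n) φ 0 ν := by
  have htpPos : tpPos (wQBF n) 0 = some 0 := by
    rw [tpPos, length_wQBF, show List.range 4 = [0, 1, 2, 3] from rfl, List.find?_cons_of_pos]
    exact decide_eq_true rfl
  rw [osemE, htpPos]

end Reduction

/-- the QBF reduction of Theorem 3 of the paper:
`α` is satisfiable iff `⟦w,0,∅⟧ᵉ(α*) = t`. -/
theorem qbf_reduction {n : ℕ} (α : QBF n) (hclosed : α.free = ∅) :
    α.Satisfiable ↔ osemE (wQBF n) (qbfTrans α) 0 (fun _ => none) = Tri.tt := by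
  have hval : ∀ v, osemE (wQBF n) (qbfTrans α) 0 (fun _ => none) = Tri.ofProp (α.sat v) :=
    fun v => by
      rw [osemE_wQBF_zero]
      exact osem_qbfTrans_wQBF α false (by simp [hclosed])
  constructor
  · rintro ⟨v, hv⟩
    exact (hval v).trans (Tri.ofProp_eq_tt.mpr hv)
  · intro h
    exact ⟨fun _ => false, Tri.ofProp_eq_tt.mp ((hval _).symm.trans h)⟩

end RV
end

section
/- For every observation w ∈ Obs(Σ) of length n, the interval of its last letter (at position n−1) is unbounded. -/
open scoped Classical

/-!
A step rewrites a single letter of an observation. If that letter is not the last one, the last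
letter is untouched. If it is, the step can only be a split, since the last interval is unbounded
(so not removable) and not a singleton (so not a data refinement); and a split keeps the part of
the interval above the split point as the new last letter, which is again unbounded.
-/

theorem not_bddAbove_inter_Ioi {α : Type*} [LinearOrder α] {s : Set α} (hs : ¬BddAbove s)
    (a : α) : ¬BddAbove (s ∩ Set.Ioi a) := by
  rintro ⟨b, hb⟩
  refine hs ⟨max a b, fun x hx => ?_⟩
  rcases le_or_gt x a with hxa | hax
  · exact le_max_of_le_left hxa
  · exact le_max_of_le_right (hb ⟨hx, hax⟩)

theorem List.getLast?_append_append_eq_append_cons {α : Type*} (u l : List α) (x : α)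
    {v : List α} (hv : v ≠ []) : (u ++ (l ++ v)).getLast? = (u ++ x :: v).getLast? := by
  calc (u ++ (l ++ v)).getLast? = v.getLast? := by
        rw [List.getLast?_append_of_ne_nil _ (List.append_ne_nil_of_right_ne_nil l hv),
          List.getLast?_append_of_ne_nil _ hv]
    _ = (u ++ ([x] ++ v)).getLast? := by
        rw [List.getLast?_append_of_ne_nil _ (List.append_ne_nil_of_right_ne_nil _ hv),
          List.getLast?_append_of_ne_nil _ hv]

namespace RV

section

variable {A : Type*}

def LastUnbounded (w : List (Letter A)) : Prop :=
  ∃ (I : Set Q) (a : A), w.getLast? = some (I, a) ∧ ¬BddAbove I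

theorem LastUnbounded.append_cons {u v l : List (Letter A)} {x : Letter A}
    (hw : LastUnbounded (u ++ x :: v)) (hl : ¬BddAbove x.1 → LastUnbounded l) :
    LastUnbounded (u ++ (l ++ v)) := by
  obtain ⟨I, a, hlast, hI⟩ := hw
  by_cases hv : v = []
  · subst hv
    rw [List.getLast?_concat, Option.some_inj] at hlast
    subst hlast
    obtain ⟨J, b, hJ, hJb⟩ := hl hI
    exact ⟨J, b, by rw [List.append_nil, List.getLast?_append, hJ, Option.some_or], hJb⟩
  · exact ⟨I, a, (List.getLast?_append_append_eq_append_cons u l x hv).trans hlast, hI⟩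

theorem Step.lastUnbounded {lt : A → A → Prop} {w w' : List (Letter A)}
    (hs : Step lt w w') (hw : LastUnbounded w) : LastUnbounded w' := by
  cases hs with
  | split _ _ _ a τ =>
    exact hw.append_cons (l := [_, _, _]) fun hI => ⟨_, a, rfl, not_bddAbove_inter_Ioi hI τ⟩
  | split0 _ _ _ a =>
    exact hw.append_cons (l := [_, _]) fun hI => ⟨_, a, rfl, not_bddAbove_inter_Ioi hI 0⟩
  | remove _ _ _ _ _ hbd => exact hw.append_cons (l := []) fun hI => absurd hbd hI
  | data => exact hw.append_cons (l := [_]) fun hI => absurd bddAbove_singleton hI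

end

theorem lastLetter_unbounded_general {A : Type} [PartialOrder A]
    (a0 : A)
    (w : List (Letter A)) (hw : Obs (· < ·) a0 w) :
    ∃ (I : Set Q) (a : A), w.getLast? = some (I, a) ∧ ¬ BddAbove I := by
  induction hw with
  | base => exact ⟨Set.univ, a0, rfl, not_bddAbove_univ⟩
  | step _ hs ih => exact hs.lastUnbounded ih

/-- the interval of the last letter of an observation is unbounded. -/
theorem lastLetter_unbounded {A : Type} [PartialOrder A]
    (a0 : A) (h0 : ∀ a : A, a0 ≤ a)
    (w : List (Letter A)) (hw : Obs (· < ·) a0 w) :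
    ∃ (I : Set Q) (a : A), w.getLast? = some (I, a) ∧ ¬ BddAbove I :=
  lastLetter_unbounded_general a0 w hw

end RV
end

section
/- For every observation w ∈ Obs(Σ) and every letter (I, a) of w with |I| > 1, the letter's alphabet component is the least element: a = a₀. -/
open scoped Classical

namespace RV

/-- (T1) copies `a` onto the non-point pieces of `I`, (T2) only deletes letters, and (T3)
changes only point letters. -/
theorem Step.exists_nonpoint_of_mem {A : Type*} {lt : A → A → Prop} {w w' : List (Letter A)}
    (h : Step lt w w') {l : Letter A} (hl : l ∈ w') (hl₁ : ¬ l.1.Subsingleton) :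
    ∃ m ∈ w, ¬ m.1.Subsingleton ∧ m.2 = l.2 := by
  have not_point : ∀ (τ : Q) (b : A), l ≠ ({τ}, b) := by
    rintro τ b rfl
    exact hl₁ Set.subsingleton_singleton
  cases h with
  | split u v I a τ hI =>
    simp only [List.mem_append, List.mem_cons] at hl
    rcases hl with hl | rfl | rfl | rfl | hl
    · exact ⟨l, by simp [hl], hl₁, rfl⟩
    · exact ⟨(I, a), by simp, hI, rfl⟩
    · exact absurd rfl (not_point τ a)
    · exact ⟨(I, a), by simp, hI, rfl⟩
    · exact ⟨l, by simp [hl], hl₁, rfl⟩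
  | split0 u v I a hI =>
    simp only [List.mem_append, List.mem_cons] at hl
    rcases hl with hl | rfl | rfl | hl
    · exact ⟨l, by simp [hl], hl₁, rfl⟩
    · exact absurd rfl (not_point 0 a)
    · exact ⟨(I, a), by simp, hI, rfl⟩
    · exact ⟨l, by simp [hl], hl₁, rfl⟩
  | remove u v =>
    rcases List.mem_append.1 hl with hl | hl <;> exact ⟨l, by simp [hl], hl₁, rfl⟩
  | data u v τ a a' =>
    simp only [List.mem_append, List.mem_cons] at hl
    rcases hl with hl | rfl | hl
    · exact ⟨l, by simp [hl], hl₁, rfl⟩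
    · exact absurd rfl (not_point τ a')
    · exact ⟨l, by simp [hl], hl₁, rfl⟩

theorem obs_gap_letters_bot_general {A : Type} [PartialOrder A]
    (a0 : A)
    (w : List (Letter A)) (hw : Obs (· < ·) a0 w) :
    ∀ l ∈ w, ¬ l.1.Subsingleton → l.2 = a0 := by
  induction hw with
  | base =>
    rintro l hl -
    rw [List.mem_singleton.1 hl]
  | step _ hstep ih =>
    intro l hl hl₁
    obtain ⟨m, hm, hm₁, hml⟩ := hstep.exists_nonpoint_of_mem hl hl₁
    exact hml ▸ ih m hm hm₁

/-- every letter of an observation whose interval has more than one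
element carries the least element `a₀` of the alphabet. -/
theorem obs_gap_letters_bot {A : Type} [PartialOrder A]
    (a0 : A) (h0 : ∀ a : A, a0 ≤ a)
    (w : List (Letter A)) (hw : Obs (· < ·) a0 w) :
    ∀ l ∈ w, ¬ l.1.Subsingleton → l.2 = a0 :=
  obs_gap_letters_bot_general a0 w hw

end RV
end
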